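/- arXiv:1509.03389 — 3 statements merged into one kernel-verified Lean document; each statement's English description precedes it below -/
import Mathlib

section
/- For a single attribute with q parties, target seat numbers s*_j ≥ 0 summing to k, and integer allocations R_j ≥ 0 summing to k, an allocation minimizes the sum over j of |R_j - s*_j| if and only if it is a Hamilton (largest remainder) allocation, i.e., each R_j equals floor(s*_j) plus possibly 1, where the extra seats go to the parties with the largest fractional remainders s*_j - floor(s*_j). -/
open Finset

/-- `R` is a Hamilton (largest remainder) allocation for targets `s` and house size `k`:
each party receives `⌊s j⌋` seats plus possibly one extra seat, where the extra seats
go to the parties with the largest fractional remainders. -/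
def IsHamilton (q k : ℕ) (s : Fin q → ℝ) (R : Fin q → ℕ) : Prop :=
  (∑ j, R j = k) ∧
  ∃ T : Finset (Fin q),
    (∀ j, (R j : ℤ) = ⌊s j⌋ + (if j ∈ T then 1 else 0)) ∧
    (∀ j ∈ T, ∀ j' ∉ T, s j' - ⌊s j'⌋ ≤ s j - ⌊s j⌋)

/-!
Write `e j = R j - s j`, so the deviation is `∑ j, |e j|` and `∑ j, e j = 0`.

If `R` minimizes the deviation, moving one seat from a party `i` to a party `j` cannot
help. Such a move gains a full unit when `e i ≥ 1`, and costs less than a unit whenever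
`e j < 0`; so a party with `e i ≥ 1` forces `e ≥ 0` everywhere, contradicting `∑ e = 0`, and
symmetrically for `e i ≤ -1`. Hence `|e j| < 1`, i.e. every party gets `⌊s j⌋` or
`⌊s j⌋ + 1` seats, and a move from a rounded-up party `i` to a rounded-down party `j` changes
the deviation by twice the difference of their remainders, which is therefore nonnegative.

Conversely, if the extra seats go to the parties with remainder at least a threshold `θ`,
then over the integers `n ↦ |n - s j| - (1 - 2θ) n` is minimized at `R j` for every `j`;
summing over `j` and using `∑ R' = ∑ R` gives the optimality of `R`.
-/

lemma Finset.exists_threshold {α : Type*} (T : Finset α) (f : α → ℝ) (hf0 : ∀ j, 0 ≤ f j)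
    (hf1 : ∀ j, f j ≤ 1) (hT : ∀ j ∈ T, ∀ j' ∉ T, f j' ≤ f j) :
    ∃ θ : ℝ, 0 ≤ θ ∧ θ ≤ 1 ∧ (∀ j ∈ T, θ ≤ f j) ∧ ∀ j ∉ T, f j ≤ θ := by
  rcases T.eq_empty_or_nonempty with rfl | hT₀
  · exact ⟨1, zero_le_one, le_rfl, by simp, fun j _ => hf1 j⟩
  obtain ⟨i, hi, hmin⟩ := T.exists_min_image f hT₀
  exact ⟨f i, hf0 i, hf1 i, hmin, fun j hj => hT i hi j hj⟩

lemma abs_floor_sub_add_mul_le {s θ : ℝ} (hθ : s - ⌊s⌋ ≤ θ) (hθ1 : θ ≤ 1) (n : ℤ) :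
    |(⌊s⌋ : ℝ) - s| + (1 - 2 * θ) * (n - ⌊s⌋) ≤ |n - s| := by
  have := Int.floor_le s
  have := Int.lt_floor_add_one s
  rw [abs_of_nonpos (by linarith)]
  rcases le_or_gt n ⌊s⌋ with hn | hn
  · have hn : (n : ℝ) ≤ ⌊s⌋ := by exact_mod_cast hn
    rw [abs_of_nonpos (by linarith)]
    nlinarith
  · have hn : (⌊s⌋ : ℝ) + 1 ≤ n := by exact_mod_cast hn
    rw [abs_of_nonneg (by linarith)]
    nlinarith

lemma abs_floor_add_one_sub_add_mul_le {s θ : ℝ} (hθ0 : 0 ≤ θ) (hθ : θ ≤ s - ⌊s⌋) (n : ℤ) :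
    |(⌊s⌋ + 1 : ℝ) - s| + (1 - 2 * θ) * (n - (⌊s⌋ + 1)) ≤ |n - s| := by
  have := Int.floor_le s
  have := Int.lt_floor_add_one s
  rw [abs_of_nonneg (by linarith)]
  rcases le_or_gt n ⌊s⌋ with hn | hn
  · have hn : (n : ℝ) ≤ ⌊s⌋ := by exact_mod_cast hn
    rw [abs_of_nonpos (by linarith)]
    nlinarith
  · have hn : (⌊s⌋ : ℝ) + 1 ≤ n := by exact_mod_cast hn
    rw [abs_of_nonneg (by linarith)]
    nlinarith

variable {ι : Type*} [Fintype ι]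

lemma Fintype.sum_sub_sum_eq_of_forall_ne_ne {M : Type*} [AddCommGroup M] {f g : ι → M}
    {i j : ι} (hij : i ≠ j) (h : ∀ l, l ≠ i → l ≠ j → f l = g l) :
    ∑ l, f l - ∑ l, g l = (f i - g i) + (f j - g j) := by
  rw [← Finset.sum_sub_distrib]
  exact Fintype.sum_eq_add i j hij fun l hl => sub_eq_zero.2 (h l hl.1 hl.2)

def seatDeviation (s : ι → ℝ) (R : ι → ℕ) : ℝ := ∑ j, |(R j : ℝ) - s j|

def IsMinDeviation (s : ι → ℝ) (R : ι → ℕ) : Prop :=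
  ∀ R' : ι → ℕ, ∑ j, R' j = ∑ j, R j → seatDeviation s R ≤ seatDeviation s R'

def IsLargestRemainder [DecidableEq ι] (s : ι → ℝ) (R : ι → ℕ) : Prop :=
  ∃ T : Finset ι,
    (∀ j, (R j : ℤ) = ⌊s j⌋ + (if j ∈ T then 1 else 0)) ∧
    (∀ j ∈ T, ∀ j' ∉ T, s j' - ⌊s j'⌋ ≤ s j - ⌊s j⌋)

namespace IsMinDeviation

variable {s : ι → ℝ} {R : ι → ℕ}

lemma transfer_nonneg (hmin : IsMinDeviation s R) {i j : ι} (hij : i ≠ j) (hi : 1 ≤ R i) :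
    0 ≤ |(R i : ℝ) - s i - 1| - |(R i : ℝ) - s i| +
      (|(R j : ℝ) - s j + 1| - |(R j : ℝ) - s j|) := by
  classical
  set R' := Function.update (Function.update R i (R i - 1)) j (R j + 1)
  have hR'i : (R' i : ℝ) = R i - 1 := by
    simp [R', hij, Nat.cast_sub hi]
  have hR'j : (R' j : ℝ) = R j + 1 := by simp [R']
  have hR'l : ∀ l, l ≠ i → l ≠ j → R' l = R l := fun l hli hlj => by simp [R', hli, hlj]
  have hsum : ∑ l, R' l = ∑ l, R l := by
    have := Fintype.sum_sub_sum_eq_of_forall_ne_ne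
      (f := fun l => (R' l : ℝ)) (g := fun l => (R l : ℝ)) hij
      fun l hli hlj => by simp only [hR'l l hli hlj]
    exact_mod_cast (by linarith : ∑ l, (R' l : ℝ) = ∑ l, (R l : ℝ))
  have hdev := Fintype.sum_sub_sum_eq_of_forall_ne_ne
    (f := fun l => |(R' l : ℝ) - s l|) (g := fun l => |(R l : ℝ) - s l|)
    hij fun l hli hlj => by simp only [hR'l l hli hlj]
  have := hmin R' hsum
  simp only [seatDeviation, hR'i, hR'j, sub_right_comm _ (1 : ℝ), add_sub_right_comm] at this hdev
  linarith

variable (hmin : IsMinDeviation s R) (hs : ∀ j, 0 ≤ s j)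
  (hbal : ∑ j, (R j : ℝ) = ∑ j, s j)
include hmin hs hbal

lemma sub_lt_one (j : ι) : (R j : ℝ) - s j < 1 := by
  by_contra! hj
  have hRj : 1 ≤ R j := by exact_mod_cast (by linarith [hs j] : (1 : ℝ) ≤ R j)
  have hnonneg : ∀ l, 0 ≤ (R l : ℝ) - s l := by
    intro l
    rcases eq_or_ne l j with rfl | hl
    · linarith
    by_contra! hneg
    have := hmin.transfer_nonneg hl.symm hRj
    rw [abs_of_nonneg (by linarith : (0 : ℝ) ≤ R j - s j - 1),
      abs_of_nonneg (by linarith : (0 : ℝ) ≤ R j - s j), abs_of_neg hneg] at this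
    cases abs_cases ((R l : ℝ) - s l + 1) <;> linarith
  have := Finset.single_le_sum (fun l _ => hnonneg l) (Finset.mem_univ j)
  rw [Finset.sum_sub_distrib, hbal, sub_self] at this
  linarith

lemma neg_one_lt_sub (j : ι) : -1 < (R j : ℝ) - s j := by
  by_contra! hj
  have hnonpos : ∀ l, (R l : ℝ) - s l ≤ 0 := by
    intro l
    rcases eq_or_ne l j with rfl | hl
    · linarith
    by_contra! hpos
    have hRl : 1 ≤ R l := (Nat.cast_pos (α := ℝ)).1 (by linarith [hs l])
    have := hmin.transfer_nonneg hl hRl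
    rw [abs_of_nonpos (by linarith : (R j : ℝ) - s j + 1 ≤ 0),
      abs_of_neg (by linarith : (R j : ℝ) - s j < 0), abs_of_pos hpos] at this
    cases abs_cases ((R l : ℝ) - s l - 1) <;> linarith
  have := Finset.single_le_sum (f := fun l => -((R l : ℝ) - s l))
    (fun l _ => neg_nonneg.2 (hnonpos l)) (Finset.mem_univ j)
  rw [Finset.sum_neg_distrib, Finset.sum_sub_distrib, hbal, sub_self] at this
  linarith

lemma floor_le (j : ι) : ⌊s j⌋ ≤ (R j : ℤ) := by
  rw [Int.floor_le_iff]
  push_cast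
  linarith [hmin.neg_one_lt_sub hs hbal j]

lemma le_floor_add_one (j : ι) : (R j : ℤ) ≤ ⌊s j⌋ + 1 := by
  rw [← sub_le_iff_le_add, Int.le_floor]
  push_cast
  linarith [hmin.sub_lt_one hs hbal j]

lemma isLargestRemainder [DecidableEq ι] : IsLargestRemainder s R := by
  refine ⟨univ.filter fun j => (R j : ℤ) = ⌊s j⌋ + 1, fun j => ?_, fun j hj j' hj' => ?_⟩
  · have := hmin.floor_le hs hbal j
    have := hmin.le_floor_add_one hs hbal j
    simp only [Finset.mem_filter, Finset.mem_univ, true_and]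
    split_ifs <;> omega
  simp only [Finset.mem_filter, Finset.mem_univ, true_and] at hj hj'
  have hj'' : (R j' : ℤ) = ⌊s j'⌋ := by
    have := hmin.floor_le hs hbal j'
    have := hmin.le_floor_add_one hs hbal j'
    omega
  have hjj' : j ≠ j' := by rintro rfl; omega
  have hRj : 1 ≤ R j := by have := Int.floor_nonneg.2 (hs j); omega
  have hjR : (R j : ℝ) = ⌊s j⌋ + 1 := by exact_mod_cast hj
  have hj'R : (R j' : ℝ) = ⌊s j'⌋ := by exact_mod_cast hj''
  have hmove := hmin.transfer_nonneg hjj' hRj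
  rw [hjR, hj'R] at hmove
  have := Int.floor_le (s j)
  have := Int.lt_floor_add_one (s j)
  have := Int.floor_le (s j')
  have := Int.lt_floor_add_one (s j')
  rw [abs_of_nonpos (by linarith), abs_of_nonneg (by linarith), abs_of_nonneg (by linarith),
    abs_of_nonpos (by linarith)] at hmove
  linarith

end IsMinDeviation

lemma IsLargestRemainder.isMinDeviation [DecidableEq ι] {s : ι → ℝ} {R : ι → ℕ}
    (h : IsLargestRemainder s R) :
    IsMinDeviation s R := by
  obtain ⟨T, hRT, hTord⟩ := h
  obtain ⟨θ, hθ0, hθ1, hθT, hθT'⟩ := T.exists_threshold (fun j => s j - ⌊s j⌋)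
    (fun j => by linarith [Int.floor_le (s j)]) (fun j => by linarith [Int.lt_floor_add_one (s j)])
    hTord
  intro R' hR'
  have key : ∀ j, |(R j : ℝ) - s j| + (1 - 2 * θ) * (R' j - R j) ≤ |(R' j : ℝ) - s j| := by
    intro j
    have hRj := hRT j
    by_cases hj : j ∈ T
    · rw [if_pos hj] at hRj
      rw [show (R j : ℝ) = ⌊s j⌋ + 1 by exact_mod_cast hRj]
      exact_mod_cast abs_floor_add_one_sub_add_mul_le hθ0 (hθT j hj) (R' j)
    · rw [if_neg hj, add_zero] at hRj
      rw [show (R j : ℝ) = ⌊s j⌋ by exact_mod_cast hRj]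
      exact_mod_cast abs_floor_sub_add_mul_le (hθT' j hj) hθ1 (R' j)
  have hsum := Finset.sum_le_sum fun j (_ : j ∈ univ) => key j
  rw [Finset.sum_add_distrib, ← Finset.mul_sum, Finset.sum_sub_distrib] at hsum
  have hR'R : ∑ j, (R' j : ℝ) = ∑ j, (R j : ℝ) := by exact_mod_cast hR'
  rw [hR'R, sub_self, mul_zero, add_zero] at hsum
  exact hsum

theorem stmt0_general (q k : ℕ) (s : Fin q → ℝ)
    (hs : ∀ j, 0 ≤ s j) (hsum : ∑ j, s j = k)
    (R : Fin q → ℕ) (hR : ∑ j, R j = k) :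
    (∀ R' : Fin q → ℕ, (∑ j, R' j = k) →
        ∑ j, |(R j : ℝ) - s j| ≤ ∑ j, |(R' j : ℝ) - s j|)
      ↔ IsHamilton q k s R := by
  have hbal : ∑ j, (R j : ℝ) = ∑ j, s j := by rw [hsum]; exact_mod_cast hR
  constructor
  · intro hmin
    exact ⟨hR, IsMinDeviation.isLargestRemainder (fun R' hR' => hmin R' (hR'.trans hR)) hs hbal⟩
  · rintro ⟨-, hH⟩ R' hR'
    exact IsLargestRemainder.isMinDeviation hH R' (hR'.trans hR.symm)

theorem stmt0 (q k : ℕ) (hk : 0 < k) (s : Fin q → ℝ)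
    (hs : ∀ j, 0 ≤ s j) (hsum : ∑ j, s j = k)
    (R : Fin q → ℕ) (hR : ∑ j, R j = k) :
    (∀ R' : Fin q → ℕ, (∑ j, R' j = k) →
        ∑ j, |(R j : ℝ) - s j| ≤ ∑ j, |(R' j : ℝ) - s j|)
      ↔ IsHamilton q k s R :=
  stmt0_general q k s hs hsum R hR
end

section
/- There exists an instance with 3 binary attributes, 4 candidates, committee size k = 2, and a target distribution such that the set of committees optimal for the L1 loss and the set of committees optimal for the L∞ (max) loss are disjoint. Concretely: candidates A, B have attribute vector (x_1^2, x_2^1, x_3^1), candidates C, D have (x_1^1, x_2^2, x_3^2), and the target puts probability 1 on value 2 for every attribute; then {C,D} is the unique L1-optimal committee of size 2, while the L∞-optimal committees of size 2 are exactly {A,C}, {A,D}, {B,C}, {B,D}. -/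
open Finset

/-- 4 candidates (0 = A, 1 = B, 2 = C, 3 = D), 3 binary attributes.
`vec c i = true` means candidate `c` has value `x_i^2` on attribute `i`.
A, B have vector (x_1^2, x_2^1, x_3^1); C, D have (x_1^1, x_2^2, x_3^2). -/
def vec : Fin 4 → Fin 3 → Bool := fun c i =>
  if c.val < 2 then decide (i = 0) else decide (i ≠ 0)

/-- Fraction of the size-2 committee `S` having value `x_i^2` on attribute `i`. -/
noncomputable def rep (S : Finset (Fin 4)) (i : Fin 3) : ℝ :=
  ((S.filter (fun c => vec c i = true)).card : ℝ) / 2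

/-- L1 loss w.r.t. the target putting probability 1 on value 2 of each attribute. -/
noncomputable def loss1 (S : Finset (Fin 4)) : ℝ :=
  ∑ i, (|rep S i - 1| + |(1 - rep S i) - 0|)

/-- L∞ (max) loss w.r.t. the same target. -/
noncomputable def lossMax (S : Finset (Fin 4)) : ℝ :=
  ⨆ i : Fin 3, max |rep S i - 1| |(1 - rep S i) - 0|

lemma rep_val (S : Finset (Fin 4)) (i : Fin 3) (n : ℕ)
    (h : (S.filter (fun c => vec c i = true)).card = n) : rep S i = n / 2 := by
  rw [rep, h]

lemma iSup3 (f : Fin 3 → ℝ) : (⨆ i, f i) = max (f 0) (max (f 1) (f 2)) := by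
  apply le_antisymm
  · exact ciSup_le fun i => by
      fin_cases i
      · exact le_max_left _ _
      · exact le_trans (le_max_left _ _) (le_max_right _ _)
      · exact le_trans (le_max_right _ _) (le_max_right _ _)
  · refine max_le (le_ciSup (Finite.bddAbove_range f) 0)
      (max_le (le_ciSup (Finite.bddAbove_range f) 1) (le_ciSup (Finite.bddAbove_range f) 2))

lemma enum2 : ∀ S : Finset (Fin 4), S.card = 2 →
    S = {0,1} ∨ S = {0,2} ∨ S = {0,3} ∨ S = {1,2} ∨ S = {1,3} ∨ S = {2,3} := by decide

lemma loss1_ab : loss1 {0,1} = 4 := by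
  simp only [loss1, Fin.sum_univ_three]
  rw [rep_val _ 0 2 (by decide), rep_val _ 1 0 (by decide), rep_val _ 2 0 (by decide)]
  norm_num

lemma lossMax_ab : lossMax {0,1} = 1 := by
  rw [lossMax, iSup3]
  rw [rep_val _ 0 2 (by decide), rep_val _ 1 0 (by decide), rep_val _ 2 0 (by decide)]
  norm_num

lemma loss1_ac : loss1 {0,2} = 3 := by
  simp only [loss1, Fin.sum_univ_three]
  rw [rep_val _ 0 1 (by decide), rep_val _ 1 1 (by decide), rep_val _ 2 1 (by decide)]
  have h12 : |(1:ℝ)/2| = 1/2 := abs_of_nonneg (by norm_num)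
  norm_num [h12]

lemma lossMax_ac : lossMax {0,2} = 1/2 := by
  rw [lossMax, iSup3]
  rw [rep_val _ 0 1 (by decide), rep_val _ 1 1 (by decide), rep_val _ 2 1 (by decide)]
  norm_num

lemma loss1_ad : loss1 {0,3} = 3 := by
  simp only [loss1, Fin.sum_univ_three]
  rw [rep_val _ 0 1 (by decide), rep_val _ 1 1 (by decide), rep_val _ 2 1 (by decide)]
  have h12 : |(1:ℝ)/2| = 1/2 := abs_of_nonneg (by norm_num)
  norm_num [h12]

lemma lossMax_ad : lossMax {0,3} = 1/2 := by
  rw [lossMax, iSup3]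
  rw [rep_val _ 0 1 (by decide), rep_val _ 1 1 (by decide), rep_val _ 2 1 (by decide)]
  norm_num

lemma loss1_bc : loss1 {1,2} = 3 := by
  simp only [loss1, Fin.sum_univ_three]
  rw [rep_val _ 0 1 (by decide), rep_val _ 1 1 (by decide), rep_val _ 2 1 (by decide)]
  have h12 : |(1:ℝ)/2| = 1/2 := abs_of_nonneg (by norm_num)
  norm_num [h12]

lemma lossMax_bc : lossMax {1,2} = 1/2 := by
  rw [lossMax, iSup3]
  rw [rep_val _ 0 1 (by decide), rep_val _ 1 1 (by decide), rep_val _ 2 1 (by decide)]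
  norm_num

lemma loss1_bd : loss1 {1,3} = 3 := by
  simp only [loss1, Fin.sum_univ_three]
  rw [rep_val _ 0 1 (by decide), rep_val _ 1 1 (by decide), rep_val _ 2 1 (by decide)]
  have h12 : |(1:ℝ)/2| = 1/2 := abs_of_nonneg (by norm_num)
  norm_num [h12]

lemma lossMax_bd : lossMax {1,3} = 1/2 := by
  rw [lossMax, iSup3]
  rw [rep_val _ 0 1 (by decide), rep_val _ 1 1 (by decide), rep_val _ 2 1 (by decide)]
  norm_num

lemma loss1_cd : loss1 {2,3} = 2 := by
  simp only [loss1, Fin.sum_univ_three]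
  rw [rep_val _ 0 0 (by decide), rep_val _ 1 2 (by decide), rep_val _ 2 2 (by decide)]
  norm_num

lemma lossMax_cd : lossMax {2,3} = 1 := by
  rw [lossMax, iSup3]
  rw [rep_val _ 0 0 (by decide), rep_val _ 1 2 (by decide), rep_val _ 2 2 (by decide)]
  norm_num

theorem stmt12 :
    (∀ S : Finset (Fin 4), S.card = 2 →
      ((∀ T : Finset (Fin 4), T.card = 2 → loss1 S ≤ loss1 T) ↔ S = {2, 3})) ∧
    (∀ S : Finset (Fin 4), S.card = 2 →
      ((∀ T : Finset (Fin 4), T.card = 2 → lossMax S ≤ lossMax T) ↔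
        (S = {0, 2} ∨ S = {0, 3} ∨ S = {1, 2} ∨ S = {1, 3}))) := by
  constructor
  · intro S hS
    constructor
    · intro hopt
      have h := hopt {2,3} (by decide)
      rcases enum2 S hS with h1 | h1 | h1 | h1 | h1 | h1 <;> subst h1 <;>
        simp only [loss1_ab, loss1_ac, loss1_ad, loss1_bc, loss1_bd, loss1_cd] at h <;>
        first | rfl | linarith
    · rintro rfl T hT
      rcases enum2 T hT with h1 | h1 | h1 | h1 | h1 | h1 <;> subst h1 <;>
        simp only [loss1_ab, loss1_ac, loss1_ad, loss1_bc, loss1_bd, loss1_cd] <;> norm_num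
  · intro S hS
    constructor
    · intro hopt
      have h := hopt {0,2} (by decide)
      rcases enum2 S hS with h1 | h1 | h1 | h1 | h1 | h1 <;> subst h1 <;>
        simp only [lossMax_ab, lossMax_ac, lossMax_ad, lossMax_bc, lossMax_bd, lossMax_cd] at h <;>
        first | tauto | linarith
    · intro h T hT
      rcases enum2 T hT with h1 | h1 | h1 | h1 | h1 | h1 <;> subst h1 <;>
        rcases h with rfl | rfl | rfl | rfl <;>
        simp only [lossMax_ab, lossMax_ac, lossMax_ad, lossMax_bc, lossMax_bd, lossMax_cd] <;>
        norm_num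
end

section
/- If a candidate database satisfies Full Supply with respect to k (for every combination of attribute values there are at least k candidates with exactly that value vector), then for every family of per-attribute integer allocations (R_i^j) with Σ_j R_i^j = k for each attribute i, there exists a committee of size k whose representation on attribute i gives exactly R_i^j members with value x_i^j for every i and j. -/
open Finset

private lemma aux_count {α : Type*} [DecidableEq α] (l : List α) (d : α) (a : α) :
    (List.range l.length).countP (fun t => decide (l.getD t d = a)) = l.count a := by
  induction l with
  | nil => simp
  | cons b l ih =>
    rw [List.length_cons, List.range_succ_eq_map, List.countP_cons, List.countP_map]
    simp only [Function.comp_def, List.getD_cons_succ, List.getD_cons_zero]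
    rw [ih, List.count_cons]
    simp

/-- Under Full Supply (every value vector occurs at least `k` times in the database),
any family of per-attribute allocations summing to `k` is simultaneously realizable
by some committee of size `k`. -/
theorem stmt17 (p : ℕ) (q : Fin p → ℕ) (k : ℕ)
    (C : Multiset (∀ i : Fin p, Fin (q i)))
    (hFS : ∀ v : ∀ i : Fin p, Fin (q i), k ≤ C.count v)
    (R : ∀ i : Fin p, Fin (q i) → ℕ) (hR : ∀ i, ∑ j, R i j = k) :
    ∃ A : Multiset (∀ i : Fin p, Fin (q i)),
      A ≤ C ∧ Multiset.card A = k ∧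
      ∀ i j, Multiset.card (A.filter (fun c => c i = j)) = R i j := by
  by_cases hq : ∀ i, 0 < q i
  · set L : ∀ i : Fin p, List (Fin (q i)) :=
      fun i => (List.finRange (q i)).flatMap (fun j => List.replicate (R i j) j) with hL
    have hcount : ∀ i (j : Fin (q i)), (L i).count j = R i j := by
      intro i j
      rw [hL]
      simp only [List.count_flatMap]
      rw [← Fin.sum_univ_def]
      simp only [Function.comp_apply, List.count_replicate]
      simp
    have hlen : ∀ i, (L i).length = k := by
      intro i
      rw [hL]
      simp only [List.length_flatMap]
      rw [← hR i, ← Fin.sum_univ_def]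
      simp
    refine ⟨(Multiset.range k).map (fun t i => (L i).getD t ⟨0, hq i⟩), ?_, ?_, ?_⟩
    · rw [Multiset.le_iff_count]
      intro v
      exact le_trans (le_trans (Multiset.count_le_card _ _) (by simp)) (hFS v)
    · simp
    · intro i j
      rw [← Multiset.countP_eq_card_filter, Multiset.countP_map,
        ← Multiset.countP_eq_card_filter]
      have hrg : Multiset.range k = ↑(List.range k) := rfl
      rw [hrg, Multiset.coe_countP]
      rw [← hcount i j, ← aux_count (L i) ⟨0, hq i⟩ j, hlen i]
  · push_neg at hq
    obtain ⟨i0, hi0⟩ := hq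
    have hq0 : q i0 = 0 := by omega
    have hk : k = 0 := by
      rw [← hR i0]
      apply Finset.sum_eq_zero
      intro j _
      exact absurd (j.2.trans_eq hq0) (Nat.not_lt_zero _)
    have hRz : ∀ i j, R i j = 0 := by
      intro i j
      have := hR i
      rw [hk] at this
      exact Finset.sum_eq_zero_iff.mp this j (mem_univ j)
    exact ⟨0, Multiset.zero_le _, by simp [hk], fun i j => by simp [hRz]⟩
end
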